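/- The 1-form ω_θ = ℓ₁ dk₁ + ℓ₂ dk₂ on the moduli space of spherical bigons of angle θ is closed; equivalently, ∂ℓ₁/∂k₂ = ∂ℓ₂/∂k₁ in the coordinates (k₁, k₂) ∈ (0,∞)². -/

import Mathlib

open Real

/-- Inverse cotangent, with values in `(0, π)`. -/
noncomputable def arccot (x : ℝ) : ℝ := π / 2 - Real.arctan x

/-- The length `ℓ₁ = 2 α₁' sin r₁` of the first side of the spherical bigon of angle `θ`,
as a function of the geodesic curvatures `(k₁, k₂)`, where `r₁ = arccot k₁` and the half-angle
`α₁'` is given by the cotangent four-part formula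
`cot α₁' = (k₂ sin r₁ - cos r₁ cos (π - θ)) / sin (π - θ)`. -/
noncomputable def ell₁ (θ k₁ k₂ : ℝ) : ℝ :=
  2 * arccot ((k₂ * Real.sin (arccot k₁) - Real.cos (arccot k₁) * Real.cos (π - θ)) /
      Real.sin (π - θ)) * Real.sin (arccot k₁)

/-- The length of the second side: obtained from `ell₁` by swapping the two sides. -/
noncomputable def ell₂ (θ k₁ k₂ : ℝ) : ℝ := ell₁ θ k₂ k₁

/-! The chain rule gives `∂ℓ₁/∂k₂ = -2 sin² r₁ sin² α₁' / sin θ'`. Substituting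
`sin² r₁ = 1 / (1 + k₁²)`, `cos r₁ = k₁ sin r₁` and `sin² α₁' = 1 / (1 + cot² α₁')` turns this into
`-2 sin θ / (sin² θ + k₁² + k₂² + 2 k₁ k₂ cos θ)`, which is visibly symmetric in `k₁` and `k₂`;
this replaces the appeal to the spherical sine law. -/

lemma sin_arccot_sq (x : ℝ) : sin (arccot x) ^ 2 = 1 / (1 + x ^ 2) := by
  rw [arccot, sin_pi_div_two_sub, cos_sq_arctan]

lemma cos_arccot (x : ℝ) : cos (arccot x) = x * sin (arccot x) := by
  rw [arccot, sin_pi_div_two_sub, cos_pi_div_two_sub]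
  exact (div_eq_iff (cos_arctan_pos x).ne').1 (by rw [← tan_eq_sin_div_cos, tan_arctan])

lemma hasDerivAt_arccot (x : ℝ) : HasDerivAt arccot (-(1 / (1 + x ^ 2))) x :=
  (hasDerivAt_arctan x).const_sub (π / 2)

lemma hasDerivAt_ell₁_snd {θ : ℝ} (hθ : sin θ ≠ 0) (k₁ k₂ : ℝ) :
    HasDerivAt (fun y => ell₁ θ k₁ y)
      (-2 * sin θ / (sin θ ^ 2 + k₁ ^ 2 + k₂ ^ 2 + 2 * k₁ * k₂ * cos θ)) k₂ := by
  have hcot : HasDerivAt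
      (fun y => (y * sin (arccot k₁) - cos (arccot k₁) * cos (π - θ)) / sin (π - θ))
      (sin (arccot k₁) / sin (π - θ)) k₂ :=
    ((hasDerivAt_mul_const _).sub_const _).div_const _
  refine ((((hasDerivAt_arccot _).comp k₂ hcot).const_mul 2).mul_const _).congr_deriv ?_
  have hs : (1 + k₁ ^ 2) * sin (arccot k₁) ^ 2 = 1 := by
    rw [sin_arccot_sq]; field_simp
  rw [sin_pi_sub, cos_pi_sub, cos_arccot]
  generalize sin (arccot k₁) = s at hs ⊢
  have one_add_cot_sq : 1 + ((k₂ * s - k₁ * s * -cos θ) / sin θ) ^ 2 =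
      s ^ 2 * (sin θ ^ 2 + k₁ ^ 2 + k₂ ^ 2 + 2 * k₁ * k₂ * cos θ) / sin θ ^ 2 := by
    field_simp
    linear_combination (-sin θ ^ 2) * hs + (k₁ * s) ^ 2 * sin_sq_add_cos_sq θ
  have hs0 : s ≠ 0 := by rintro rfl; simp at hs
  rw [one_add_cot_sq]
  field_simp

theorem one_form_closed_general (θ : ℝ) (hθ : θ ∈ Set.Ioo 0 π) (k₁ k₂ : ℝ) :
    deriv (fun y : ℝ => ell₁ θ k₁ y) k₂ = deriv (fun x : ℝ => ell₂ θ x k₂) k₁ := by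
  have hsin : sin θ ≠ 0 := (sin_pos_of_pos_of_lt_pi hθ.1 hθ.2).ne'
  show _ = deriv (fun x => ell₁ θ k₂ x) k₁
  rw [(hasDerivAt_ell₁_snd hsin k₁ k₂).deriv, (hasDerivAt_ell₁_snd hsin k₂ k₁).deriv]
  ring

/-- The 1-form `ω_θ = ℓ₁ dk₁ + ℓ₂ dk₂` on the moduli space of spherical bigons
of angle `θ ∈ (0, π)` is closed: in the coordinates `(k₁, k₂) ∈ (0, ∞)²` one has
`∂ℓ₁/∂k₂ = ∂ℓ₂/∂k₁`. -/
theorem one_form_closed (θ : ℝ) (hθ : θ ∈ Set.Ioo 0 π) (k₁ k₂ : ℝ) (hk₁ : 0 < k₁)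
    (hk₂ : 0 < k₂) :
    deriv (fun y : ℝ => ell₁ θ k₁ y) k₂ = deriv (fun x : ℝ => ell₂ θ x k₂) k₁ :=
  one_form_closed_general θ hθ k₁ k₂
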